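/- Let ξ⁰ ∈ ℝⁿ satisfy ξ⁰_i ≠ ξ⁰_Φ for all i ≠ Φ, ξ⁰_i ≠ ξ⁰_Ψ for all i ≠ Ψ, and ξ⁰_Φ < ξ⁰_Ψ. Suppose a finite sequence of transformation steps — each step replacing the current ξ by ξ̃ where, for some adjacent nodes i, j with ξ_i ∉ {ξ_Φ, ξ_Ψ} and ξ_j ∈ {ξ_Φ, ξ_Ψ}, ξ̃_i = ξ_j and ξ̃_t = ξ_t for t ≠ i — transforms ξ⁰ into a vector ξ satisfying property (twostates): ξ_i ∈ {ξ_Φ, ξ_Ψ} for every node i. Then ξ satisfies property (twostates2) (for every node i ≠ Φ with ξ_i = ξ_Φ there is a walk from i to Φ all of whose nodes j satisfy ξ_j = ξ_Φ, and symmetrically with Ψ in place of Φ), and the set I₀ = {(sign((Dξ)_j), j) : j ∈ {1,…,m}, (Dξ)_j ≠ 0} is admissible and irreducible. -/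
import Mathlib


open Matrix

noncomputable section

/-- The vector `λ_{j₁}α_{j₁}e_{j₁} + ⋯ + λ_{j_s}α_{j_s}e_{j_s}` associated to a set
`I₀ ⊆ {−1,1} × {1,…,m}` (encoded as a finite set of pairs `(α, j)`) and
coefficients `lam`. -/
def combo {m : ℕ} (I₀ : Finset (ℝ × Fin m)) (lam : Fin m → ℝ) : Fin m → ℝ :=
  ∑ p ∈ I₀, (lam p.2 * p.1) • (Pi.single p.2 (1 : ℝ) : Fin m → ℝ)

/-- `I₀` is admissible: there exist `c₁ > 0` and nonnegative reals `λ` such that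
`Rᵀ(λ_{j₁}α_{j₁}e_{j₁}+⋯+λ_{j_s}α_{j_s}e_{j_s}) = c₁` and
`(D⊥)ᵀ(λ_{j₁}α_{j₁}e_{j₁}+⋯+λ_{j_s}α_{j_s}e_{j_s}) = 0`. -/
def Admissible {m r : ℕ} (R : Fin m → ℝ) (Dperp : Matrix (Fin m) (Fin r) ℝ)
    (I₀ : Finset (ℝ × Fin m)) : Prop :=
  ∃ (lam : Fin m → ℝ) (c₁ : ℝ), 0 < c₁ ∧ (∀ j, 0 ≤ lam j) ∧
    R ⬝ᵥ combo I₀ lam = c₁ ∧ Dperpᵀ *ᵥ combo I₀ lam = 0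

/-- Two nodes are adjacent if some spring has them as its two endpoints. -/
def Adjacent {m n : ℕ} (src trg : Fin m → Fin n) (i j : Fin n) : Prop :=
  ∃ k, (src k = i ∧ trg k = j) ∨ (src k = j ∧ trg k = i)

/-- Property (twostates2): every node sharing coordinate `ξ_Φ` (resp. `ξ_Ψ`) is joined
to `Φ` (resp. `Ψ`) by a walk all of whose nodes have coordinate `ξ_Φ` (resp. `ξ_Ψ`). -/
def TwoStates2 {m n : ℕ} (src trg : Fin m → Fin n) (Φ Ψ : Fin n) (ξ : Fin n → ℝ) : Prop :=
  (∀ i : Fin n, i ≠ Φ → ξ i = ξ Φ →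
    ∃ (q : ℕ) (w : ℕ → Fin n), w 0 = i ∧ w q = Φ ∧
      (∀ t < q, Adjacent src trg (w t) (w (t + 1))) ∧ (∀ t ≤ q, ξ (w t) = ξ Φ)) ∧
  (∀ i : Fin n, i ≠ Ψ → ξ i = ξ Ψ →
    ∃ (q : ℕ) (w : ℕ → Fin n), w 0 = i ∧ w q = Ψ ∧
      (∀ t < q, Adjacent src trg (w t) (w (t + 1))) ∧ (∀ t ≤ q, ξ (w t) = ξ Ψ))

/-- One transformation step (rule (trans)): pick adjacent nodes `i`, `j` with
`ξ_i ∉ {ξ_Φ, ξ_Ψ}` and `ξ_j ∈ {ξ_Φ, ξ_Ψ}` and set `ξ_i := ξ_j`. -/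
def Step {m n : ℕ} (src trg : Fin m → Fin n) (Φ Ψ : Fin n)
    (ξ ξ' : Fin n → ℝ) : Prop :=
  ∃ i j : Fin n, Adjacent src trg i j ∧ ξ i ≠ ξ Φ ∧ ξ i ≠ ξ Ψ ∧
    (ξ j = ξ Φ ∨ ξ j = ξ Ψ) ∧ ξ' = Function.update ξ i (ξ j)

section Aux

lemma abs_mul_sign' (x : ℝ) : |x| * Real.sign x = x := by
  rcases lt_trichotomy x 0 with h|h|h
  · rw [Real.sign_of_neg h, abs_of_neg h]; ring
  · simp [h, Real.sign_zero]
  · rw [Real.sign_of_pos h, abs_of_pos h]; ring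

lemma mulVec_apply_eq {m n : ℕ} (src trg : Fin m → Fin n)
    (D : Matrix (Fin m) (Fin n) ℝ)
    (hD : ∀ k i, D k i = (if i = trg k then (1:ℝ) else 0) - (if i = src k then 1 else 0))
    (η : Fin n → ℝ) (k : Fin m) : (D *ᵥ η) k = η (trg k) - η (src k) := by
  simp only [Matrix.mulVec, dotProduct, hD, sub_mul, ite_mul, one_mul, zero_mul,
    Finset.sum_sub_distrib, Finset.sum_ite_eq', Finset.mem_univ, if_true]

lemma combo_apply {m : ℕ} (I : Finset (ℝ × Fin m)) (lam : Fin m → ℝ) (k : Fin m) :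
    combo I lam k = ∑ p ∈ I, if k = p.2 then lam p.2 * p.1 else 0 := by
  simp [combo, Finset.sum_apply, Pi.single_apply, mul_ite, mul_one, mul_zero]

/-- The one-sided reachability property used as an invariant. -/
def Reach {m n : ℕ} (src trg : Fin m → Fin n) (P : Fin n) (c : ℝ) (η : Fin n → ℝ) : Prop :=
  ∀ i, i ≠ P → η i = c → ∃ (q : ℕ) (w : ℕ → Fin n), w 0 = i ∧ w q = P ∧
    (∀ t < q, Adjacent src trg (w t) (w (t + 1))) ∧ (∀ t ≤ q, η (w t) = c)

lemma reach_update {m n : ℕ} (src trg : Fin m → Fin n) (P : Fin n) (c : ℝ)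
    (η : Fin n → ℝ) (i j : Fin n) (hadj : Adjacent src trg i j) (hi : η i ≠ c)
    (h : Reach src trg P c η) :
    Reach src trg P c (Function.update η i (η j)) := by
  intro i' hi' hval
  by_cases hcase : i' = i
  · subst hcase
    rw [Function.update_self] at hval
    -- hval : η j = c
    by_cases hjP : j = P
    · refine ⟨1, fun t => if t = 0 then i' else P, by simp, by simp, ?_, ?_⟩
      · intro t ht
        interval_cases t
        simpa [hjP] using hadj
      · intro t ht
        interval_cases t
        · simpa using hval
        · show Function.update η i' (η j) P = c
          rw [Function.update_of_ne (Ne.symm hi'), ← hjP, hval]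
    · obtain ⟨q, w, hw0, hwq, hadjw, hvw⟩ := h j hjP hval
      refine ⟨q + 1, fun t => if t = 0 then i' else w (t - 1), by simp, by simp [hwq], ?_, ?_⟩
      · intro t ht
        rcases Nat.eq_zero_or_pos t with rfl | hpos
        · simpa [hw0] using hadj
        · have h1 : t ≠ 0 := hpos.ne'
          have h2 : t + 1 ≠ 0 := by omega
          simp only [h1, h2, if_false]
          have : t - 1 < q := by omega
          have := hadjw (t - 1) this
          have he : t - 1 + 1 = t := by omega
          rwa [he] at this
      · intro t ht
        rcases Nat.eq_zero_or_pos t with rfl | hpos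
        · simpa using hval
        · have h1 : t ≠ 0 := hpos.ne'
          have hwt : η (w (t - 1)) = c := hvw (t - 1) (by omega)
          have hne : w (t - 1) ≠ i' := fun h' => hi (h' ▸ hwt)
          show Function.update η i' (η j) (if t = 0 then i' else w (t - 1)) = c
          rw [if_neg h1, Function.update_of_ne hne]
          exact hwt
  · rw [Function.update_of_ne hcase] at hval
    obtain ⟨q, w, hw0, hwq, hadjw, hvw⟩ := h i' hi' hval
    refine ⟨q, w, hw0, hwq, hadjw, fun t ht => ?_⟩
    have hne : w t ≠ i := fun h' => hi (h' ▸ hvw t ht)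
    rw [Function.update_of_ne hne]
    exact hvw t ht

end Aux

/-- Theorem `propmain`: if `ξ⁰` gives all nodes distinct coordinates
from `ξ⁰_Φ` and `ξ⁰_Ψ` (except `Φ`, `Ψ` themselves) with `ξ⁰_Φ < ξ⁰_Ψ`, and a finite
sequence of transformation steps brings `ξ⁰` to a `ξ` satisfying (twostates), then `ξ`
satisfies (twostates2) and the set `I₀ = {(sign((Dξ)_j), j) : (Dξ)_j ≠ 0}` is
admissible and irreducible. -/
theorem statement10 (m n : ℕ) (hn : 2 ≤ n) (hmn : n ≤ m)
    (src trg : Fin m → Fin n) (hst : ∀ k, src k ≠ trg k)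
    (D : Matrix (Fin m) (Fin n) ℝ)
    (hD : ∀ k i, D k i = (if i = trg k then (1 : ℝ) else 0) - (if i = src k then 1 else 0))
    (hconn : ∀ i i' : Fin n, ∃ (q : ℕ) (w : ℕ → Fin n), w 0 = i ∧ w q = i' ∧
      ∀ t < q, Adjacent src trg (w t) (w (t + 1)))
    (Φ Ψ : Fin n) (hΦΨ : Φ ≠ Ψ)
    (R : Fin m → ℝ) (hR : ∀ ξ : Fin n → ℝ, R ⬝ᵥ (D *ᵥ ξ) = ξ Ψ - ξ Φ)
    (Dperp : Matrix (Fin m) (Fin (m - n + 1)) ℝ)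
    (hperp : Dperpᵀ * D = 0) (hrank : Dperp.rank = m - n + 1)
    (hker : ∀ v : Fin m → ℝ, Dperpᵀ *ᵥ v = 0 ↔ ∃ ξ : Fin n → ℝ, v = D *ᵥ ξ)
    -- the initial configuration `ξ⁰`
    (ξ0 : Fin n → ℝ)
    (h0Φ : ∀ i : Fin n, i ≠ Φ → ξ0 i ≠ ξ0 Φ)
    (h0Ψ : ∀ i : Fin n, i ≠ Ψ → ξ0 i ≠ ξ0 Ψ)
    (h0lt : ξ0 Φ < ξ0 Ψ)
    -- a finite sequence of transformation steps brings `ξ⁰` to `ξ`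
    (ξ : Fin n → ℝ)
    (hsteps : Relation.ReflTransGen (Step src trg Φ Ψ) ξ0 ξ)
    -- `ξ` satisfies property (twostates)
    (htwo : ∀ i : Fin n, ξ i = ξ Φ ∨ ξ i = ξ Ψ)
    -- `I₀ = {(sign((Dξ)_j), j) : (Dξ)_j ≠ 0}`
    (I₀ : Finset (ℝ × Fin m))
    (hI₀ : ∀ p : ℝ × Fin m,
      p ∈ I₀ ↔ ((D *ᵥ ξ) p.2 ≠ 0 ∧ p.1 = Real.sign ((D *ᵥ ξ) p.2))) :
    TwoStates2 src trg Φ Ψ ξ ∧ Admissible R Dperp I₀ ∧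
      ∀ I ⊂ I₀, ¬ Admissible R Dperp I := by
  classical
  set v : Fin m → ℝ := D *ᵥ ξ with hv
  -- invariant along the steps
  have hinv : ∀ η, Relation.ReflTransGen (Step src trg Φ Ψ) ξ0 η →
      η Φ = ξ0 Φ ∧ η Ψ = ξ0 Ψ ∧ Reach src trg Φ (ξ0 Φ) η ∧ Reach src trg Ψ (ξ0 Ψ) η := by
    intro η hη
    induction hη with
    | refl =>
      refine ⟨rfl, rfl, ?_, ?_⟩
      · intro i hi hval; exact absurd hval (h0Φ i hi)
      · intro i hi hval; exact absurd hval (h0Ψ i hi)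
    | tail hab hbc ih =>
      obtain ⟨hΦv, hΨv, hreachΦ, hreachΨ⟩ := ih
      obtain ⟨i, j, hadj, hiΦ, hiΨ, hjval, rfl⟩ := hbc
      have hiΦ' : i ≠ Φ := fun h => hiΦ (by rw [h])
      have hiΨ' : i ≠ Ψ := fun h => hiΨ (by rw [h])
      refine ⟨?_, ?_, ?_, ?_⟩
      · rw [Function.update_of_ne (Ne.symm hiΦ')]; exact hΦv
      · rw [Function.update_of_ne (Ne.symm hiΨ')]; exact hΨv
      · exact reach_update src trg Φ (ξ0 Φ) _ i j hadj (by rwa [hΦv] at hiΦ) hreachΦ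
      · exact reach_update src trg Ψ (ξ0 Ψ) _ i j hadj (by rwa [hΨv] at hiΨ) hreachΨ
  obtain ⟨hΦv, hΨv, hreachΦ, hreachΨ⟩ := hinv ξ hsteps
  have hlt : ξ Φ < ξ Ψ := by rw [hΦv, hΨv]; exact h0lt
  have hts2 : TwoStates2 src trg Φ Ψ ξ := by
    constructor
    · intro i hi hval
      obtain ⟨q, w, hw0, hwq, hadjw, hvw⟩ := hreachΦ i hi (by rwa [hΦv] at hval)
      exact ⟨q, w, hw0, hwq, hadjw, fun t ht => by rw [hvw t ht, hΦv]⟩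
    · intro i hi hval
      obtain ⟨q, w, hw0, hwq, hadjw, hvw⟩ := hreachΨ i hi (by rwa [hΨv] at hval)
      exact ⟨q, w, hw0, hwq, hadjw, fun t ht => by rw [hvw t ht, hΨv]⟩
  -- combo I₀ |v| = v
  have hcombo : combo I₀ (fun j => |v j|) = v := by
    funext k
    rw [combo_apply]
    by_cases hk : v k = 0
    · rw [Finset.sum_eq_zero, hk]
      intro p hp
      have hp' := (hI₀ p).1 hp
      rw [if_neg]
      intro h
      exact hp'.1 (h ▸ hk)
    · have hmem : (Real.sign (v k), k) ∈ I₀ := (hI₀ _).2 ⟨hk, rfl⟩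
      rw [Finset.sum_eq_single ((Real.sign (v k), k) : ℝ × Fin m)]
      · rw [if_pos rfl]
        exact abs_mul_sign' (v k)
      · intro p hp hne
        rw [if_neg]
        intro h
        have hp' := (hI₀ p).1 hp
        apply hne
        have : p.2 = k := h.symm
        apply Prod.ext
        · rw [hp'.2, this]
        · exact this
      · intro h; exact absurd hmem h
  have hDperpD : ∀ ζ : Fin n → ℝ, Dperpᵀ *ᵥ (D *ᵥ ζ) = 0 := by
    intro ζ
    rw [Matrix.mulVec_mulVec, hperp, Matrix.zero_mulVec]
  have hAdm : Admissible R Dperp I₀ := by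
    refine ⟨fun j => |v j|, ξ Ψ - ξ Φ, by linarith, fun j => abs_nonneg _, ?_, ?_⟩
    · rw [hcombo, hv, hR]
    · rw [hcombo, hv]; exact hDperpD ξ
  refine ⟨hts2, hAdm, ?_⟩
  -- irreducibility
  intro I hsub hadm
  obtain ⟨lam, c₁, hc₁, hlam, hRc, hperp'⟩ := hadm
  set u : Fin m → ℝ := combo I lam with hu
  obtain ⟨ζ, hζ⟩ := (hker u).1 hperp'
  have hzero : ∀ k : Fin m, (∀ p ∈ I, p.2 ≠ k) → u k = 0 := by
    intro k hk
    rw [hu, combo_apply]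
    apply Finset.sum_eq_zero
    intro p hp
    rw [if_neg (fun h => hk p hp h.symm)]
  -- u vanishes where v does
  have hu0 : ∀ k, v k = 0 → u k = 0 := by
    intro k hvk
    apply hzero
    intro p hp h
    exact ((hI₀ p).1 (hsub.subset hp)).1 (h ▸ hvk)
  -- ζ constant along same-level adjacency
  have hζadj : ∀ i j : Fin n, Adjacent src trg i j → ξ i = ξ j → ζ i = ζ j := by
    intro i j hadj hij
    obtain ⟨k, hk | hk⟩ := hadj
    · have hvk : v k = 0 := by
        rw [hv, mulVec_apply_eq src trg D hD, hk.1, hk.2, hij, sub_self]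
      have huk : u k = 0 := hu0 k hvk
      rw [hζ] at huk
      rw [mulVec_apply_eq src trg D hD, hk.1, hk.2] at huk
      exact (sub_eq_zero.1 huk).symm
    · have hvk : v k = 0 := by
        rw [hv, mulVec_apply_eq src trg D hD, hk.1, hk.2, hij, sub_self]
      have huk : u k = 0 := hu0 k hvk
      rw [hζ] at huk
      rw [mulVec_apply_eq src trg D hD, hk.1, hk.2] at huk
      exact sub_eq_zero.1 huk
  -- ζ constant on each level set
  have hconstΦ : ∀ i : Fin n, ξ i = ξ Φ → ζ i = ζ Φ := by
    intro i hval
    by_cases hiΦ : i = Φ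
    · rw [hiΦ]
    · obtain ⟨q, w, hw0, hwq, hadjw, hvw⟩ := hts2.1 i hiΦ hval
      have key : ∀ t, t ≤ q → ζ (w t) = ζ (w 0) := by
        intro t
        induction t with
        | zero => intro _; rfl
        | succ s ih =>
          intro hs
          have h1 : s < q := by omega
          have h2 : ζ (w s) = ζ (w (s + 1)) :=
            hζadj _ _ (hadjw s h1) (by rw [hvw s h1.le, hvw (s + 1) hs])
          rw [← h2, ih (by omega)]
      have := key q le_rfl
      rw [hwq, hw0] at this
      exact this.symm
  have hconstΨ : ∀ i : Fin n, ξ i = ξ Ψ → ζ i = ζ Ψ := by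
    intro i hval
    by_cases hiΨ : i = Ψ
    · rw [hiΨ]
    · obtain ⟨q, w, hw0, hwq, hadjw, hvw⟩ := hts2.2 i hiΨ hval
      have key : ∀ t, t ≤ q → ζ (w t) = ζ (w 0) := by
        intro t
        induction t with
        | zero => intro _; rfl
        | succ s ih =>
          intro hs
          have h1 : s < q := by omega
          have h2 : ζ (w s) = ζ (w (s + 1)) :=
            hζadj _ _ (hadjw s h1) (by rw [hvw s h1.le, hvw (s + 1) hs])
          rw [← h2, ih (by omega)]
      have := key q le_rfl
      rw [hwq, hw0] at this
      exact this.symm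
  -- pick the missing spring
  obtain ⟨p₀, hp₀I₀, hp₀I⟩ := Finset.exists_of_ssubset hsub
  set j₀ : Fin m := p₀.2 with hj₀
  have hp₀ := (hI₀ p₀).1 hp₀I₀
  have hvj₀ : v j₀ ≠ 0 := hp₀.1
  have huj₀ : u j₀ = 0 := by
    apply hzero
    intro p hp h
    apply hp₀I
    have hpI₀ := (hI₀ p).1 (hsub.subset hp)
    have hpeq : p = p₀ := by
      apply Prod.ext
      · rw [hpI₀.2, h, hp₀.2]
      · exact h
    exact hpeq ▸ hp
  have hζeq : ζ (trg j₀) = ζ (src j₀) := by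
    rw [hζ] at huj₀
    rw [mulVec_apply_eq src trg D hD] at huj₀
    exact sub_eq_zero.1 huj₀
  have hξne : ξ (trg j₀) ≠ ξ (src j₀) := by
    intro h
    apply hvj₀
    rw [hv, mulVec_apply_eq src trg D hD, h, sub_self]
  have hζΦΨ : ζ Φ = ζ Ψ := by
    rcases htwo (src j₀) with hs | hs <;> rcases htwo (trg j₀) with ht | ht
    · exact absurd (ht.trans hs.symm) hξne
    · rw [← hconstΦ _ hs, ← hconstΨ _ ht, hζeq]
    · rw [← hconstΨ _ hs, ← hconstΦ _ ht, hζeq]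
    · exact absurd (ht.trans hs.symm) hξne
  have : c₁ = 0 := by
    rw [← hRc, hζ, hR, hζΦΨ, sub_self]
  exact absurd this hc₁.ne'
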